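/- arXiv:1705.06060 — 6 statements merged into one kernel-verified Lean document; each statement's English description precedes it below -/
import Mathlib

section
/- Let G be a group and H a subgroup such that there is a uniform finite bound n with [H : H ∩ gHg⁻¹] ≤ n for all g ∈ G. Then there exists a normal subgroup N of G commensurable with H, i.e., [H : H ∩ N] and [N : H ∩ N] are both finite. -/
/-!
Let `G` act on `G ⧸ H`, so that `[K : K ∩ gHg⁻¹]` is the size of the `K`-orbit of `gH`. Among
the subgroups `K` commensurable with `H` choose one whose orbits on `G ⧸ H` have the least
uniform bound `m`. For finitely many conjugates `xᵢKxᵢ⁻¹` the intersection `D` is again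
commensurable with `H`, so by minimality some orbit `D • gH` has exactly `m` points. Each
`xᵢKxᵢ⁻¹`-orbit of `gH` contains it and has at most `m` points, so all these orbits coincide and
are invariant under the join `J` of the `xᵢKxᵢ⁻¹`. Hence `[J : J ∩ gHg⁻¹] = m` and
`[J : J ∩ H] ≤ [H : H ∩ gHg⁻¹] m ≤ n m`. The join `N` of all conjugates of `K` is normal,
contains `K`, and is the directed union of such `J`, so `[N : N ∩ H] ≤ n m` as well.
-/

open scoped Pointwise
open MulAction

theorem Set.encard_iUnion_le_of_directed {α ι : Type*} [Nonempty ι] {s : ι → Set α}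
    (hs : Directed (· ⊆ ·) s) {c : ℕ} (h : ∀ i, (s i).encard ≤ c) :
    (⋃ i, s i).encard ≤ c := by
  by_contra! hlt
  obtain ⟨t, hts, htc⟩ := Set.exists_subset_encard_eq (Order.add_one_le_of_lt hlt)
  have ht : t.Finite := Set.finite_of_encard_eq_coe (k := c + 1) (by exact_mod_cast htc)
  obtain ⟨i, hi⟩ :=
    hs.exists_mem_subset_of_finset_subset_biUnion (s := ht.toFinset) (by simpa using hts)
  have hti : t.encard ≤ c := (Set.encard_le_encard (by simpa using hi)).trans (h i)
  rw [htc] at hti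
  have : c + 1 ≤ c := by exact_mod_cast hti
  omega

theorem iSup_eq_iSup_nonempty_finset {α ι : Type*} [CompleteLattice α] (f : ι → α) :
    ⨆ i, f i = ⨆ s : {s : Finset ι // s.Nonempty}, ⨆ i : s.1, f i :=
  le_antisymm
    (iSup_le fun i => le_iSup_of_le ⟨{i}, Finset.singleton_nonempty i⟩
      (le_iSup_of_le ⟨i, Finset.mem_singleton_self i⟩ le_rfl))
    (iSup_le fun _ => iSup_le fun i => le_iSup f i)

theorem directed_iSup_nonempty_finset {α ι : Type*} [CompleteLattice α] (f : ι → α) :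
    Directed (· ≤ ·) fun s : {s : Finset ι // s.Nonempty} => ⨆ i : s.1, f i := by
  classical
  intro s t
  refine ⟨⟨s.1 ∪ t.1, s.2.mono Finset.subset_union_left⟩, ?_, ?_⟩ <;>
    exact iSup_le fun i => le_iSup_of_le ⟨i, by simp [i.2]⟩ le_rfl

namespace MulAction

variable {G X : Type*} [Group G] [MulAction G X]

theorem relIndex_stabilizer_eq_ncard_orbit (A : Subgroup G) (x : X) :
    (stabilizer G x).relIndex A = (orbit A x).ncard := by
  rw [Subgroup.relIndex, show (stabilizer G x).subgroupOf A = stabilizer A x from rfl,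
    index_stabilizer]

theorem orbit_subset_orbit_of_le {A B : Subgroup G} (h : A ≤ B) (x : X) :
    orbit A x ⊆ orbit B x := by
  rintro _ ⟨a, rfl⟩
  exact ⟨Subgroup.inclusion h a, rfl⟩

theorem orbit_iSup_eq_of_forall_orbit_eq {ι : Sort*} {A : ι → Subgroup G} {x : X} {S : Set X}
    (i₀ : ι) (h : ∀ i, orbit (A i) x = S) : orbit (⨆ i, A i : Subgroup G) x = S := by
  have hS : ⨆ i, A i ≤ stabilizer G S := iSup_le fun i a ha => by
    rw [mem_stabilizer_iff, ← h i]
    exact smul_orbit (⟨a, ha⟩ : A i) x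
  refine subset_antisymm ?_
    ((h i₀).symm.trans_subset (orbit_subset_orbit_of_le (le_iSup A i₀) x))
  rintro _ ⟨⟨g, hg⟩, rfl⟩
  rw [← hS hg]
  exact Set.smul_mem_smul_set (h i₀ ▸ mem_orbit_self x)

theorem orbit_iSup_of_directed {ι : Type*} [Nonempty ι] {A : ι → Subgroup G}
    (hA : Directed (· ≤ ·) A) (x : X) :
    orbit (⨆ i, A i : Subgroup G) x = ⋃ i, orbit (A i) x := by
  refine subset_antisymm ?_
    (Set.iUnion_subset fun i => orbit_subset_orbit_of_le (le_iSup A i) x)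
  rintro _ ⟨⟨g, hg⟩, rfl⟩
  obtain ⟨i, hi⟩ := (Subgroup.mem_iSup_of_directed hA).1 hg
  exact Set.mem_iUnion.2 ⟨i, ⟨g, hi⟩, rfl⟩

theorem relIndex_stabilizer_iSup_eq_of_forall_le {ι : Sort*} {x : X} {D : Subgroup G}
    {B : ι → Subgroup G} (i₀ : ι) (hDB : ∀ i, D ≤ B i)
    (hB : ∀ i, (stabilizer G x).relIndex (B i) ≠ 0)
    (hle : ∀ i, (stabilizer G x).relIndex (B i) ≤ (stabilizer G x).relIndex D) :
    (stabilizer G x).relIndex (⨆ i, B i) = (stabilizer G x).relIndex D := by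
  simp only [relIndex_stabilizer_eq_ncard_orbit] at hB hle ⊢
  rw [orbit_iSup_eq_of_forall_orbit_eq i₀ fun i => (Set.eq_of_subset_of_ncard_le
    (orbit_subset_orbit_of_le (hDB i) x) (hle i) (Set.finite_of_ncard_ne_zero (hB i))).symm]

theorem relIndex_stabilizer_iSup_ne_zero_of_directed {ι : Type*} [Nonempty ι] {x : X}
    {A : ι → Subgroup G} (hA : Directed (· ≤ ·) A) {c : ℕ}
    (hfin : ∀ i, (stabilizer G x).relIndex (A i) ≠ 0)
    (hle : ∀ i, (stabilizer G x).relIndex (A i) ≤ c) :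
    (stabilizer G x).relIndex (⨆ i, A i) ≠ 0 := by
  simp only [relIndex_stabilizer_eq_ncard_orbit] at hfin hle ⊢
  have hbound : (orbit (⨆ i, A i : Subgroup G) x).encard ≤ c := by
    rw [orbit_iSup_of_directed hA]
    have hdir : Directed (· ⊆ ·) fun i => orbit (A i) x := fun i j =>
      (hA i j).imp fun _ hk => ⟨orbit_subset_orbit_of_le hk.1 x, orbit_subset_orbit_of_le hk.2 x⟩
    refine Set.encard_iUnion_le_of_directed hdir fun i => ?_
    rw [← (Set.finite_of_ncard_ne_zero (hfin i)).cast_ncard_eq]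
    exact_mod_cast hle i
  exact ((Set.ncard_pos (Set.finite_of_encard_le_coe hbound)).2 ⟨x, mem_orbit_self x⟩).ne'

end MulAction

namespace Subgroup

variable {G : Type*} [Group G]

theorem relIndex_iSup_eq_of_forall_le {ι : Sort*} {L D : Subgroup G} {B : ι → Subgroup G}
    (i₀ : ι) (hDB : ∀ i, D ≤ B i) (hB : ∀ i, L.relIndex (B i) ≠ 0)
    (hle : ∀ i, L.relIndex (B i) ≤ L.relIndex D) : L.relIndex (⨆ i, B i) = L.relIndex D := by
  rw [← stabilizer_quotient L] at hB hle ⊢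
  exact relIndex_stabilizer_iSup_eq_of_forall_le i₀ hDB hB hle

theorem relIndex_iSup_ne_zero_of_forall_finset {ι : Type*} [Nonempty ι] {L : Subgroup G}
    {A : ι → Subgroup G} {c : ℕ}
    (h : ∀ s : Finset ι, s.Nonempty →
      L.relIndex (⨆ i : s, A i) ≠ 0 ∧ L.relIndex (⨆ i : s, A i) ≤ c) :
    L.relIndex (⨆ i, A i) ≠ 0 := by
  obtain ⟨i⟩ := ‹Nonempty ι›
  have : Nonempty {s : Finset ι // s.Nonempty} := ⟨⟨{i}, Finset.singleton_nonempty i⟩⟩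
  rw [← stabilizer_quotient L] at h ⊢
  rw [iSup_eq_iSup_nonempty_finset]
  exact relIndex_stabilizer_iSup_ne_zero_of_directed (directed_iSup_nonempty_finset A)
    (fun s => (h s.1 s.2).1) fun s => (h s.1 s.2).2

theorem relIndex_le_relIndex_mul_relIndex {A B J : Subgroup G} (hAB : A.relIndex B ≠ 0)
    (hBJ : B.relIndex J ≠ 0) : A.relIndex J ≤ A.relIndex B * B.relIndex J := by
  have hAB' : A.relIndex (B ⊓ J) ≠ 0 := fun h => hAB (relIndex_eq_zero_of_le_right inf_le_left h)
  calc A.relIndex J ≤ (A ⊓ B).relIndex J := by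
        refine relIndex_le_of_le_left inf_le_left ?_
        rw [← relIndex_inf_mul_relIndex]
        exact mul_ne_zero hAB' hBJ
    _ = A.relIndex (B ⊓ J) * B.relIndex J := (relIndex_inf_mul_relIndex A B J).symm
    _ ≤ A.relIndex B * B.relIndex J := by
        gcongr
        exact relIndex_le_of_le_right inf_le_left hAB

theorem Commensurable.iInf {ι : Type*} [Finite ι] [Nonempty ι] {H : Subgroup G}
    {K : ι → Subgroup G} (h : ∀ i, Commensurable (K i) H) : Commensurable (⨅ i, K i) H := by
  refine ⟨relIndex_iInf_ne_zero fun i => (h i).1, fun h0 => ?_⟩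
  obtain ⟨i⟩ := ‹Nonempty ι›
  exact (h i).2 (relIndex_eq_zero_of_le_right (iInf_le K i) h0)

theorem relIndex_conj_smul_conj_smul (H K : Subgroup G) (g k : G) :
    (MulAut.conj g • H).relIndex (MulAut.conj k • K) =
      (MulAut.conj (k⁻¹ * g) • H).relIndex K := by
  rw [← relIndex_pointwise_smul (MulAut.conj k⁻¹), smul_smul, smul_smul, ← map_mul, ← map_mul,
    inv_mul_cancel, map_one, one_smul]

theorem relIndex_conj_smul_right (H K : Subgroup G) (g : G) :
    H.relIndex (MulAut.conj g • K) = (MulAut.conj g⁻¹ • H).relIndex K := by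
  simpa only [map_one, one_smul, mul_one] using relIndex_conj_smul_conj_smul H K 1 g

theorem iSup_conj_smul_normal (K : Subgroup G) : (⨆ x : G, MulAut.conj x • K).Normal := by
  refine ⟨fun a ha g => ?_⟩
  have hconj : MulAut.conj g • ⨆ x : G, MulAut.conj x • K ≤ ⨆ x : G, MulAut.conj x • K := by
    change map (MulAut.conj g).toMonoidHom _ ≤ _
    rw [map_iSup]
    exact iSup_le fun x => le_iSup_of_le (g * x) (by rw [map_mul, mul_smul]; rfl)
  simpa using hconj (smul_mem_pointwise_smul a (MulAut.conj g) _ ha)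

section Schlichting

variable {H : Subgroup G}

theorem commensurable_conj_smul_self (hfin : ∀ g : G, (MulAut.conj g • H).relIndex H ≠ 0)
    (g : G) : Commensurable (MulAut.conj g • H) H :=
  ⟨hfin g, relIndex_conj_smul_right H H g ▸ hfin g⁻¹⟩

theorem Commensurable.conj_smul (hfin : ∀ g : G, (MulAut.conj g • H).relIndex H ≠ 0)
    {K : Subgroup G} (hK : Commensurable K H) (g : G) :
    Commensurable (MulAut.conj g • K) H :=
  ((Commensurable.commensurable_conj (ConjAct.toConjAct g)).1 hK).trans
    (commensurable_conj_smul_self hfin g)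

theorem exists_commensurable_minimal_conj_bound {n : ℕ}
    (hn : ∀ g : G, (MulAut.conj g • H).relIndex H ≤ n) :
    ∃ (K : Subgroup G) (m : ℕ), Commensurable K H ∧
      (∀ g : G, (MulAut.conj g • H).relIndex K ≤ m) ∧
      ∀ K' : Subgroup G, Commensurable K' H → ∃ g : G, m ≤ (MulAut.conj g • H).relIndex K' := by
  classical
  have hP : ∃ m K, Commensurable K H ∧ ∀ g : G, (MulAut.conj g • H).relIndex K ≤ m :=
    ⟨n, H, .refl H, hn⟩
  obtain ⟨K, hK, hKm⟩ := Nat.find_spec hP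
  refine ⟨K, Nat.find hP, hK, hKm, fun K' hK' => ?_⟩
  by_contra! hlt
  have hle := Nat.find_min' hP ⟨K', hK', fun g => Nat.le_sub_one_of_lt (hlt g)⟩
  have h1 := hlt 1
  omega

theorem relIndex_iSup_conj_smul_le {n m : ℕ}
    (hH : ∀ g : G, (MulAut.conj g • H).relIndex H ≠ 0 ∧ (MulAut.conj g • H).relIndex H ≤ n)
    {K : Subgroup G} (hK : Commensurable K H)
    (hKm : ∀ g : G, (MulAut.conj g • H).relIndex K ≤ m)
    (hmin : ∀ K' : Subgroup G, Commensurable K' H → ∃ g : G, m ≤ (MulAut.conj g • H).relIndex K')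
    {ι : Type*} [Finite ι] [Nonempty ι] (x : ι → G) :
    H.relIndex (⨆ i, MulAut.conj (x i) • K) ≠ 0 ∧
      H.relIndex (⨆ i, MulAut.conj (x i) • K) ≤ n * m := by
  have hfin : ∀ g : G, (MulAut.conj g • H).relIndex H ≠ 0 := fun g => (hH g).1
  obtain ⟨g, hg⟩ := hmin _ (Commensurable.iInf fun i => hK.conj_smul hfin (x i))
  obtain ⟨i₀⟩ := ‹Nonempty ι›
  have hD : ∀ i, ⨅ j, MulAut.conj (x j) • K ≤ MulAut.conj (x i) • K :=
    iInf_le fun j => MulAut.conj (x j) • K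
  have hLK : ∀ i, (MulAut.conj g • H).relIndex (MulAut.conj (x i) • K) ≤ m := fun i => by
    rw [relIndex_conj_smul_conj_smul]
    exact hKm _
  have hLK₀ : ∀ i, (MulAut.conj g • H).relIndex (MulAut.conj (x i) • K) ≠ 0 := fun i =>
    ((hK.conj_smul hfin (x i)).trans (commensurable_conj_smul_self hfin g).symm).2
  have hLD : (MulAut.conj g • H).relIndex (⨅ i, MulAut.conj (x i) • K) = m :=
    le_antisymm ((relIndex_le_of_le_right (hD i₀) (hLK₀ i₀)).trans (hLK i₀)) hg
  have hm : m ≠ 0 := hLD ▸ fun h0 => hLK₀ i₀ (relIndex_eq_zero_of_le_right (hD i₀) h0)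
  have hLJ : (MulAut.conj g • H).relIndex (⨆ i, MulAut.conj (x i) • K) = m :=
    (relIndex_iSup_eq_of_forall_le i₀ hD hLK₀ fun i => hLD ▸ hLK i).trans hLD
  have hHL : H.relIndex (MulAut.conj g • H) = (MulAut.conj g⁻¹ • H).relIndex H :=
    relIndex_conj_smul_right H H g
  refine ⟨relIndex_ne_zero_trans (hHL ▸ (hH g⁻¹).1) (hLJ ▸ hm), ?_⟩
  calc H.relIndex (⨆ i, MulAut.conj (x i) • K)
      ≤ H.relIndex (MulAut.conj g • H) *
          (MulAut.conj g • H).relIndex (⨆ i, MulAut.conj (x i) • K) :=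
        relIndex_le_relIndex_mul_relIndex (hHL ▸ (hH g⁻¹).1) (hLJ ▸ hm)
    _ ≤ n * m := by
        rw [hLJ, hHL]
        exact Nat.mul_le_mul_right m (hH g⁻¹).2

end Schlichting

end Subgroup

/-- Schlichting's Theorem: if a subgroup `H` of `G` is uniformly commensurable with
all its `G`-conjugates, then it is commensurable with a normal subgroup of `G`. -/
theorem schlichting {G : Type*} [Group G] (H : Subgroup G) (n : ℕ)
    (hbound : ∀ g : G,
      0 < (H.map (MulAut.conj g).toMonoidHom).relIndex H ∧
      (H.map (MulAut.conj g).toMonoidHom).relIndex H ≤ n) :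
    ∃ N : Subgroup G, N.Normal ∧ Subgroup.Commensurable H N := by
  -- `MulAut.conj g • H` unfolds to `H.map (MulAut.conj g).toMonoidHom`.
  have hH : ∀ g : G, (MulAut.conj g • H).relIndex H ≠ 0 ∧ (MulAut.conj g • H).relIndex H ≤ n :=
    fun g => ⟨(hbound g).1.ne', (hbound g).2⟩
  obtain ⟨K, m, hK, hKm, hmin⟩ :=
    Subgroup.exists_commensurable_minimal_conj_bound fun g => (hH g).2
  refine ⟨⨆ x : G, MulAut.conj x • K, Subgroup.iSup_conj_smul_normal K, ?_, fun h0 => hK.1 ?_⟩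
  · refine Subgroup.relIndex_iSup_ne_zero_of_forall_finset (c := n * m) fun s hs => ?_
    have : Nonempty s := hs.to_subtype
    exact Subgroup.relIndex_iSup_conj_smul_le hH hK hKm hmin Subtype.val
  · exact Subgroup.relIndex_eq_zero_of_le_left
      (le_iSup_of_le (1 : G) (by rw [map_one, one_smul])) h0
end

section
/- Let Ω be a set, K a subgroup of the symmetric group on Ω, and F a nonempty K-invariant family of subsets of Ω such that there is a finite bound n with |A Δ B| ≤ n for all A, B ∈ F (symmetric difference). Then there exists a K-invariant subset S ⊆ Ω with |S Δ A| finite for every A ∈ F. -/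
/-!
Call `C` a center of `𝔉` with bound `m` if `|C ∆ A| ≤ m` for all `A ∈ 𝔉`, and take `m` least.
The centers form a `K`-invariant family, and it is finite: otherwise the sets `C ∆ A₀` (`A₀ ∈ 𝔉`
fixed) are infinitely many sets of size `≤ m`, so they have a sunflower core `Y` with petals
avoiding any prescribed finite set, and `Y ∆ A₀` is then a center with bound `m - 1`. The union
of the finitely many centers is `K`-invariant and at finite distance from every member of `𝔉`.
-/

open Set
open scoped symmDiff

section Sunflower

variable {α : Type*} {𝒟 : Set (Set α)} {m : ℕ}

lemma exists_maximal_subset_of_infinite (hsmall : ∀ D ∈ 𝒟, D.Finite ∧ D.ncard ≤ m)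
    (hinf : 𝒟.Infinite) :
    ∃ Y : Set α, {D ∈ 𝒟 | Y ⊆ D}.Infinite ∧ ∀ x ∉ Y, {D ∈ 𝒟 | insert x Y ⊆ D}.Finite := by
  classical
  let P : ℕ → Prop := fun k => ∃ Y : Set α, Y.ncard = k ∧ {D ∈ 𝒟 | Y ⊆ D}.Infinite
  have hP0 : P 0 := ⟨∅, ncard_empty α, by simpa using hinf⟩
  obtain ⟨Y, hYcard, hYinf⟩ := Nat.findGreatest_spec (Nat.zero_le m) hP0
  refine ⟨Y, hYinf, fun x hx => not_infinite.mp fun hxinf => ?_⟩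
  obtain ⟨D, hD, hxYD⟩ := hxinf.nonempty
  have hYfin : Y.Finite := (hsmall D hD).1.subset ((subset_insert x Y).trans hxYD)
  have hcard : (insert x Y).ncard = Nat.findGreatest P m + 1 := by
    rw [ncard_insert_of_notMem hx hYfin, hYcard]
  refine Nat.findGreatest_is_greatest (P := P) (lt_add_one _) ?_ ⟨insert x Y, hcard, hxinf⟩
  exact hcard ▸ (ncard_le_ncard hxYD (hsmall D hD).1).trans (hsmall D hD).2

lemma exists_sunflower_core (hsmall : ∀ D ∈ 𝒟, D.Finite ∧ D.ncard ≤ m) (hinf : 𝒟.Infinite) :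
    ∃ Y : Set α, ∀ X : Set α, X.Finite → ∃ D ∈ 𝒟, Y ⊂ D ∧ Disjoint (D \ Y) X := by
  obtain ⟨Y, hYinf, hins⟩ := exists_maximal_subset_of_infinite hsmall hinf
  refine ⟨Y, fun X hX => ?_⟩
  have hbad : ({Y} ∪ ⋃ x ∈ X \ Y, {D ∈ 𝒟 | insert x Y ⊆ D}).Finite :=
    (finite_singleton Y).union (hX.sdiff.biUnion fun x hx => hins x hx.2)
  obtain ⟨D, ⟨hD, hYD⟩, hgood⟩ := (hYinf.sdiff hbad).nonempty
  simp only [mem_union, mem_singleton_iff, mem_iUnion, mem_ofPred_eq, not_or, not_exists] at hgood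
  refine ⟨D, hD, hYD.ssubset_of_ne (Ne.symm hgood.1), disjoint_left.mpr ?_⟩
  rintro x ⟨hxD, hxY⟩ hxX
  exact hgood.2 x ⟨hxX, hxY⟩ ⟨hD, insert_subset hxD hYD⟩

end Sunflower

lemma symmDiff_ssubset_symmDiff {α : Type*} {Y D X : Set α} (hYD : Y ⊂ D)
    (hdisj : Disjoint (D \ Y) X) : Y ∆ X ⊂ D ∆ X := by
  obtain ⟨x, hxD, hxY⟩ := exists_of_ssubset hYD
  have hxX : x ∉ X := disjoint_left.mp hdisj ⟨hxD, hxY⟩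
  refine ssubset_iff_subset_ne.mpr ⟨fun y hy => ?_, fun h => ?_⟩
  · rcases mem_symmDiff.mp hy with ⟨hyY, hyX⟩ | ⟨hyX, hyY⟩
    · exact Or.inl ⟨hYD.subset hyY, hyX⟩
    · exact Or.inr ⟨hyX, fun hyD => disjoint_left.mp hdisj ⟨hyD, hyY⟩ hyX⟩
  · have hx : x ∈ D ∆ X := Or.inl ⟨hxD, hxX⟩
    rw [← h] at hx
    rcases hx with ⟨hxY', -⟩ | ⟨hxX', -⟩
    exacts [hxY hxY', hxX hxX']

lemma Set.Finite.symmDiff_sUnion {α : Type*} {M : Set (Set α)} {A : Set α} (hM : M.Finite)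
    (hne : M.Nonempty) (h : ∀ C ∈ M, (C ∆ A).Finite) : ((⋃₀ M) ∆ A).Finite := by
  refine (hM.biUnion h).subset fun x hx => ?_
  rcases mem_symmDiff.mp hx with ⟨⟨C, hC, hxC⟩, hxA⟩ | ⟨hxA, hxM⟩
  · exact mem_biUnion hC (Or.inl ⟨hxC, hxA⟩)
  · obtain ⟨C, hC⟩ := hne
    exact mem_biUnion hC (Or.inr ⟨hxA, fun hxC => hxM ⟨C, hC, hxC⟩⟩)

lemma Equiv.Perm.image_sUnion_eq {α : Type*} {M : Set (Set α)} (e : Equiv.Perm α)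
    (h : ∀ C ∈ M, e '' C ∈ M) (h' : ∀ C ∈ M, ⇑e⁻¹ '' C ∈ M) : e '' ⋃₀ M = ⋃₀ M := by
  refine (image_sUnion ..).trans (congrArg _ (Subset.antisymm ?_ fun C hC => ?_))
  · rintro _ ⟨C, hC, rfl⟩
    exact h C hC
  · exact ⟨⇑e⁻¹ '' C, h' C hC, by simp [image_image]⟩

section Centers

variable {Ω : Type*} {𝔉 : Set (Set Ω)} {m : ℕ}

def centers (𝔉 : Set (Set Ω)) (m : ℕ) : Set (Set Ω) :=
  {C | ∀ A ∈ 𝔉, (C ∆ A).Finite ∧ (C ∆ A).ncard ≤ m}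

lemma image_mem_centers {e : Equiv.Perm Ω} (he : ∀ A ∈ 𝔉, ⇑e⁻¹ '' A ∈ 𝔉) {C : Set Ω}
    (hC : C ∈ centers 𝔉 m) : e '' C ∈ centers 𝔉 m := by
  intro A hA
  have hcomm : (e '' C) ∆ A = e '' (C ∆ (⇑e⁻¹ '' A)) := by
    rw [image_symmDiff e.injective, image_image]
    simp
  rw [hcomm, ncard_image_of_injective _ e.injective]
  exact ⟨(hC _ (he A hA)).1.image e, (hC _ (he A hA)).2⟩

lemma exists_closer_of_centers_infinite {A₀ : Set Ω} (hA₀ : A₀ ∈ 𝔉)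
    (hinf : (centers 𝔉 m).Infinite) :
    ∃ C' : Set Ω, ∀ A ∈ 𝔉, (C' ∆ A).Finite ∧ (C' ∆ A).ncard < m := by
  have h𝒟inf : ((· ∆ A₀) '' centers 𝔉 m).Infinite :=
    hinf.image (symmDiff_left_injective A₀).injOn
  obtain ⟨Y, hY⟩ := exists_sunflower_core (by rintro _ ⟨C, hC, rfl⟩; exact hC A₀ hA₀) h𝒟inf
  obtain ⟨C₁, hC₁⟩ := hinf.nonempty
  refine ⟨Y ∆ A₀, fun A hA => ?_⟩
  have hXfin : (A₀ ∆ A).Finite := by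
    refine ((hC₁ A₀ hA₀).1.union (hC₁ A hA).1).subset ?_
    exact symmDiff_comm A₀ C₁ ▸ symmDiff_triangle A₀ C₁ A
  obtain ⟨_, ⟨C, hC, rfl⟩, hYD, hdisj⟩ := hY _ hXfin
  have hlt : Y ∆ (A₀ ∆ A) ⊂ C ∆ A := by
    simpa [symmDiff_assoc] using symmDiff_ssubset_symmDiff hYD hdisj
  rw [symmDiff_assoc]
  exact ⟨(hC A hA).1.subset hlt.subset,
    (ncard_lt_ncard hlt (hC A hA).1).trans_le (hC A hA).2⟩

lemma centers_finite_of_forall_lt_eq_empty {A₀ : Set Ω} (hA₀ : A₀ ∈ 𝔉)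
    (hmin : ∀ r < m, centers 𝔉 r = ∅) : (centers 𝔉 m).Finite := by
  refine not_infinite.mp fun hinf => ?_
  obtain ⟨C, hC⟩ := exists_closer_of_centers_infinite hA₀ hinf
  have hm : 0 < m := (Nat.zero_le _).trans_lt (hC A₀ hA₀).2
  have hC' : C ∈ centers 𝔉 (m - 1) := fun A hA => ⟨(hC A hA).1, Nat.le_sub_one_of_lt (hC A hA).2⟩
  rwa [hmin (m - 1) (Nat.sub_lt hm one_pos)] at hC'

end Centers

/-- Peter Neumann's set-theoretic version of Schlichting's Theorem. -/
theorem neumann_sets {Ω : Type*} (K : Subgroup (Equiv.Perm Ω)) (𝔉 : Set (Set Ω))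
    (hne : 𝔉.Nonempty)
    (hinv : ∀ k ∈ K, ∀ A ∈ 𝔉, (⇑k '' A) ∈ 𝔉)
    (n : ℕ)
    (hbound : ∀ A ∈ 𝔉, ∀ B ∈ 𝔉, (symmDiff A B).Finite ∧ (symmDiff A B).ncard ≤ n) :
    ∃ S : Set Ω, (∀ k ∈ K, ⇑k '' S = S) ∧ ∀ A ∈ 𝔉, (symmDiff S A).Finite := by
  classical
  obtain ⟨A₀, hA₀⟩ := hne
  have hex : ∃ r, (centers 𝔉 r).Nonempty := ⟨n, A₀, hbound A₀ hA₀⟩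
  set M := centers 𝔉 (Nat.find hex)
  have hMfin : M.Finite := centers_finite_of_forall_lt_eq_empty hA₀ fun r hr =>
    not_nonempty_iff_eq_empty.mp (Nat.find_min hex hr)
  have hMinv : ∀ k ∈ K, ∀ C ∈ M, ⇑k '' C ∈ M := fun k hk C hC =>
    image_mem_centers (fun A hA => hinv _ (K.inv_mem hk) A hA) hC
  refine ⟨⋃₀ M, fun k hk => ?_, fun A hA => ?_⟩
  · exact k.image_sUnion_eq (hMinv k hk) (hMinv _ (K.inv_mem hk))
  · exact hMfin.symmDiff_sUnion (Nat.find_spec hex) fun C hC => (hC A hA).1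
end

section
/- Let V be a vector space over a field k, Γ a group of linear automorphisms of V, and F a nonempty Γ-invariant family of subspaces of V such that there is a finite bound n with dim(U/(U ∩ W)) ≤ n for all U, W ∈ F. Then there exists a Γ-invariant subspace N of V such that dim(N/(N ∩ U)) and dim(U/(N ∩ U)) are finite for every U ∈ F. -/
/-!
Let `𝓘` be the closure of `𝔉` under finite intersections. Every `X ∈ 𝓘` lies in a member of `𝔉`,
so `j X = max_{W ∈ 𝔉} dim X/(X ∩ W) ≤ n` (`maxRelCodim 𝔉 X`); let `𝒦` (`argminMaxRelCodim 𝔉`)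
be the set of minimisers of `j` on `𝓘` and `N = ∑ 𝒦`. Since `Γ` permutes `𝔉`, it preserves `𝓘`,
`j`, `𝒦` and hence `N`.

If `Z ≤ X` both lie in `𝒦` and `W ∈ 𝔉` realises `j Z`, then
`dim X/(X ∩ W) ≤ j X ≤ j Z = dim Z/(Z ∩ W)`, which forces `X ≤ Z + W`. As `𝒦` is closed under
`⊓`, finitely many members of `𝒦` lie above a common `Z ≤ M` for a fixed `M ∈ 𝒦`, hence in
`M + W` for some `W ∈ 𝔉`. So `dim N/M` is bounded by `sup_{W ∈ 𝔉} dim W/(W ∩ M)`, which is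
finite because `M` is a finite intersection of members of `𝔉`; commensurability of `N` with every
`U ∈ 𝔉` follows through `M`.
-/

open Cardinal

theorem exists_le_of_mem_infClosure {α : Type*} [SemilatticeInf α] {s : Set α} {a : α}
    (ha : a ∈ infClosure s) : ∃ b ∈ s, a ≤ b :=
  infClosure_min (t := {a | ∃ b ∈ s, a ≤ b}) (fun b hb => ⟨b, hb, le_rfl⟩)
    (fun _ ⟨b, hb, hab⟩ _ _ => ⟨b, hb, inf_le_left.trans hab⟩) ha

namespace Submodule

section Semiring

variable {R M : Type*} [Semiring R] [AddCommMonoid M] [Module R M]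

theorem map_sSup_eq_of_forall_map_mem {Γ : Subgroup (M ≃ₗ[R] M)} {S : Set (Submodule R M)}
    (hS : ∀ γ ∈ Γ, ∀ X ∈ S, X.map (γ : M →ₗ[R] M) ∈ S) {γ : M ≃ₗ[R] M} (hγ : γ ∈ Γ) :
    (sSup S).map (γ : M →ₗ[R] M) = sSup S := by
  have hle : ∀ γ ∈ Γ, (sSup S).map (γ : M →ₗ[R] M) ≤ sSup S := fun γ hγ =>
    map_le_iff_le_comap.mpr (sSup_le fun X hX => map_le_iff_le_comap.mp (le_sSup (hS γ hγ X hX)))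
  refine le_antisymm (hle γ hγ) ?_
  rw [map_equiv_eq_comap_symm, ← map_le_iff_le_comap]
  exact hle γ⁻¹ (inv_mem hγ)

theorem map_mem_infClosure {𝔉 : Set (Submodule R M)} (e : M ≃ₗ[R] M)
    (he : ∀ U ∈ 𝔉, U.map (e : M →ₗ[R] M) ∈ 𝔉) {X : Submodule R M} (hX : X ∈ infClosure 𝔉) :
    X.map (e : M →ₗ[R] M) ∈ infClosure 𝔉 :=
  infClosure_min (t := orderIsoMapComap e ⁻¹' infClosure 𝔉)
    (fun U hU => subset_infClosure (he U hU)) (infClosed_infClosure.preimage _) hX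

end Semiring

variable {k E : Type*} [DivisionRing k] [AddCommGroup E] [Module k E]

noncomputable def relCodim (B A : Submodule k E) : Cardinal :=
  Module.rank k (A ⧸ B.comap A.subtype)

theorem relCodim_eq_rank_map_mkQ (A B : Submodule k E) :
    B.relCodim A = Module.rank k (A.map B.mkQ) := by
  have hker : LinearMap.ker (B.mkQ ∘ₗ A.subtype) = B.comap A.subtype := by
    rw [LinearMap.ker_comp, ker_mkQ]
  have hrange : LinearMap.range (B.mkQ ∘ₗ A.subtype) = A.map B.mkQ := by
    rw [LinearMap.range_comp, range_subtype]
  rw [relCodim, ← hker, ← hrange]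
  exact (B.mkQ ∘ₗ A.subtype).quotKerEquivRange.rank_eq

theorem relCodim_mono_right {Z A : Submodule k E} (h : Z ≤ A) (B : Submodule k E) :
    B.relCodim Z ≤ B.relCodim A := by
  simpa only [relCodim_eq_rank_map_mkQ] using rank_mono (map_mono h)

theorem rank_quotient_le_of_le {p q : Submodule k E} (h : p ≤ q) :
    Module.rank k (E ⧸ q) ≤ Module.rank k (E ⧸ p) :=
  LinearMap.rank_le_of_surjective _ (factor_surjective h)

theorem relCodim_anti_left {B B' : Submodule k E} (h : B ≤ B') (A : Submodule k E) :
    B'.relCodim A ≤ B.relCodim A :=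
  rank_quotient_le_of_le (comap_mono h)

theorem rank_quotient_inf_le (p q : Submodule k E) :
    Module.rank k (E ⧸ p ⊓ q) ≤ Module.rank k (E ⧸ p) + Module.rank k (E ⧸ q) := by
  have hker : LinearMap.ker (p.mkQ.prod q.mkQ) = p ⊓ q := by
    rw [LinearMap.ker_prod, ker_mkQ, ker_mkQ]
  rw [← rank_prod', ← hker]
  exact ((p.mkQ.prod q.mkQ).quotKerEquivRange.rank_eq).trans_le (rank_le _)

theorem relCodim_inf_le (B C A : Submodule k E) :
    (B ⊓ C).relCodim A ≤ B.relCodim A + C.relCodim A := by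
  rw [relCodim, comap_inf]
  exact rank_quotient_inf_le _ _

theorem relCodim_triangle (A B C : Submodule k E) :
    C.relCodim A ≤ B.relCodim A + C.relCodim B := by
  -- pass through the chain `A ≥ A ⊓ B ≥ A ⊓ B ⊓ C`
  have h := LinearMap.lift_rank_quot_map_le (f := inclusion (inf_le_left : A ⊓ B ≤ A))
    (C.comap (A ⊓ B).subtype)
  simp only [lift_id] at h
  rw [range_inclusion] at h
  calc C.relCodim A
      ≤ Module.rank k (A ⧸ (C.comap (A ⊓ B).subtype).map (inclusion inf_le_left)) := by
        refine rank_quotient_le_of_le ?_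
        rintro _ ⟨x, hx, rfl⟩
        exact hx
    _ ≤ Module.rank k (A ⧸ (A ⊓ B).comap A.subtype) + C.relCodim (A ⊓ B) := h
    _ ≤ B.relCodim A + C.relCodim B := by
        gcongr
        · exact rank_quotient_le_of_le fun x hx => ⟨x.2, hx⟩
        · exact relCodim_mono_right inf_le_right C

theorem le_sup_of_toNat_relCodim_le {Z A W : Submodule k E} (hZA : Z ≤ A)
    (hA : W.relCodim A < ℵ₀) (h : (W.relCodim A).toNat ≤ (W.relCodim Z).toNat) :
    A ≤ Z ⊔ W := by
  simp only [relCodim_eq_rank_map_mkQ] at hA h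
  have := Module.rank_lt_aleph0_iff.mp hA
  have heq : Z.map W.mkQ = A.map W.mkQ := eq_of_le_of_finrank_le (map_mono hZA) h
  calc A ≤ (A.map W.mkQ).comap W.mkQ := le_comap_map _ _
    _ = Z ⊔ W := by rw [← heq, comap_map_mkQ, sup_comm]

theorem relCodim_map_equiv (e : E ≃ₗ[k] E) (A B : Submodule k E) :
    (B.map (e : E →ₗ[k] E)).relCodim (A.map (e : E →ₗ[k] E)) = B.relCodim A := by
  let f : (E ⧸ B) ≃ₗ[k] (E ⧸ B.map (e : E →ₗ[k] E)) := Quotient.equiv B _ e rfl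
  have hcomp : (B.map (e : E →ₗ[k] E)).mkQ ∘ₗ (e : E →ₗ[k] E) = (f : _ →ₗ[k] _) ∘ₗ B.mkQ := rfl
  rw [relCodim_eq_rank_map_mkQ, relCodim_eq_rank_map_mkQ, ← map_comp, hcomp, map_comp,
    f.rank_map_eq]

theorem rank_iSup_le_of_forall_finset {ι : Type*} (p : ι → Submodule k E) (C : ℕ)
    (h : ∀ t : Finset ι, ∃ q : Submodule k E, (∀ i ∈ t, p i ≤ q) ∧ Module.rank k q ≤ C) :
    Module.rank k ↥(⨆ i, p i) ≤ C := by
  refine _root_.rank_le fun s hs => ?_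
  set v : s → E := fun x => ((x : ↥(⨆ i, p i)) : E)
  have hv : LinearIndependent k v := hs.map' _ (ker_subtype _)
  have hspan : span k (Set.range v) ≤ ⨆ i, p i :=
    span_le.mpr (Set.range_subset_iff.mpr fun x => x.1.2)
  obtain ⟨t, ht⟩ := CompleteLattice.IsCompactElement.exists_finset_of_le_iSup _
    (finite_span_isCompactElement _ (Set.finite_range v)) p hspan
  obtain ⟨q, hpq, hq⟩ := h t
  have hvq : ∀ x, v x ∈ q := fun x =>
    (iSup₂_le hpq : ⨆ i ∈ t, p i ≤ q) (ht (subset_span ⟨x, rfl⟩))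
  have hw : LinearIndependent k fun x => (⟨v x, hvq x⟩ : q) :=
    LinearIndependent.of_comp q.subtype hv
  exact_mod_cast (mk_coe_finset (s := s)).symm.trans_le (hw.cardinal_le_rank.trans hq)

variable {𝔉 : Set (Submodule k E)}

theorem exists_relCodim_le_of_mem_infClosure {n : ℕ}
    (hbound : ∀ U ∈ 𝔉, ∀ W ∈ 𝔉, W.relCodim U ≤ n) {X : Submodule k E}
    (hX : X ∈ infClosure 𝔉) :
    ∃ C : ℕ, ∀ W ∈ 𝔉, X.relCodim W ≤ C :=
  infClosure_min (t := {X | ∃ C : ℕ, ∀ W ∈ 𝔉, X.relCodim W ≤ (C : Cardinal)})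
    (fun U hU => ⟨n, fun W hW => hbound W hW U hU⟩)
    (fun X ⟨C, hC⟩ Y ⟨D, hD⟩ => ⟨C + D, fun W hW => by
      grw [relCodim_inf_le, hC W hW, hD W hW, Nat.cast_add]⟩) hX

theorem relCodim_le_of_mem_infClosure {n : ℕ}
    (hbound : ∀ U ∈ 𝔉, ∀ W ∈ 𝔉, W.relCodim U ≤ n) {X : Submodule k E}
    (hX : X ∈ infClosure 𝔉) : ∀ W ∈ 𝔉, W.relCodim X ≤ n := fun W hW => by
  obtain ⟨A, hA, hXA⟩ := exists_le_of_mem_infClosure hX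
  exact (relCodim_mono_right hXA W).trans (hbound A hA W hW)

variable (𝔉) in
noncomputable def maxRelCodim (X : Submodule k E) : ℕ :=
  sSup ((fun W => (W.relCodim X).toNat) '' 𝔉)

theorem toNat_relCodim_le_maxRelCodim {n : ℕ} {X W : Submodule k E}
    (hX : ∀ W ∈ 𝔉, W.relCodim X ≤ n) (hW : W ∈ 𝔉) :
    (W.relCodim X).toNat ≤ maxRelCodim 𝔉 X := by
  refine le_csSup ⟨n, ?_⟩ ⟨W, hW, rfl⟩
  rintro _ ⟨W', hW', rfl⟩
  simpa using toNat_le_toNat (hX W' hW') natCast_lt_aleph0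

theorem exists_toNat_relCodim_eq_maxRelCodim {n : ℕ} {X : Submodule k E}
    (hX : ∀ W ∈ 𝔉, W.relCodim X ≤ n) (h𝔉 : 𝔉.Nonempty) :
    ∃ W ∈ 𝔉, (W.relCodim X).toNat = maxRelCodim 𝔉 X := by
  refine Nat.sSup_mem (h𝔉.image _) ⟨n, ?_⟩
  rintro _ ⟨W', hW', rfl⟩
  simpa using toNat_le_toNat (hX W' hW') natCast_lt_aleph0

theorem maxRelCodim_mono {n : ℕ} {Z X : Submodule k E} (hZX : Z ≤ X)
    (hX : ∀ W ∈ 𝔉, W.relCodim X ≤ n) : maxRelCodim 𝔉 Z ≤ maxRelCodim 𝔉 X := by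
  refine csSup_le' ?_
  rintro _ ⟨W, hW, rfl⟩
  exact (toNat_le_toNat (relCodim_mono_right hZX W) ((hX W hW).trans_lt natCast_lt_aleph0)).trans
    (toNat_relCodim_le_maxRelCodim hX hW)

theorem maxRelCodim_map_le {n : ℕ} {X : Submodule k E} (hX : ∀ W ∈ 𝔉, W.relCodim X ≤ n)
    (e : E ≃ₗ[k] E) (he : ∀ U ∈ 𝔉, U.map (e.symm : E →ₗ[k] E) ∈ 𝔉) :
    maxRelCodim 𝔉 (X.map (e : E →ₗ[k] E)) ≤ maxRelCodim 𝔉 X := by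
  refine csSup_le' ?_
  rintro _ ⟨W, hW, rfl⟩
  have hW' : (W.map (e.symm : E →ₗ[k] E)).map (e : E →ₗ[k] E) = W := by
    rw [← comap_equiv_eq_map_symm, map_comap_eq_of_surjective e.surjective]
  dsimp only
  rw [← hW', relCodim_map_equiv]
  exact toNat_relCodim_le_maxRelCodim hX (he W hW)

variable (𝔉) in
def argminMaxRelCodim : Set (Submodule k E) :=
  {X | X ∈ infClosure 𝔉 ∧ ∀ Y ∈ infClosure 𝔉, maxRelCodim 𝔉 X ≤ maxRelCodim 𝔉 Y}

theorem argminMaxRelCodim_nonempty (h𝔉 : 𝔉.Nonempty) : (argminMaxRelCodim 𝔉).Nonempty := by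
  obtain ⟨X, hX, hmin⟩ := (InvImage.wf (maxRelCodim 𝔉) wellFounded_lt).has_min (infClosure 𝔉)
    (h𝔉.mono subset_infClosure)
  exact ⟨X, hX, fun Y hY => not_lt.mp (hmin Y hY)⟩

theorem infClosed_argminMaxRelCodim {n : ℕ}
    (hbound : ∀ U ∈ 𝔉, ∀ W ∈ 𝔉, W.relCodim U ≤ n) : InfClosed (argminMaxRelCodim 𝔉) := by
  rintro X ⟨hX, hXmin⟩ Y ⟨hY, -⟩
  refine ⟨infClosed_infClosure hX hY, fun Z hZ => ?_⟩
  exact (maxRelCodim_mono inf_le_left (relCodim_le_of_mem_infClosure hbound hX)).trans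
    (hXmin Z hZ)

theorem map_mem_argminMaxRelCodim {n : ℕ}
    (hbound : ∀ U ∈ 𝔉, ∀ W ∈ 𝔉, W.relCodim U ≤ n) (e : E ≃ₗ[k] E)
    (he : ∀ U ∈ 𝔉, U.map (e : E →ₗ[k] E) ∈ 𝔉) (he' : ∀ U ∈ 𝔉, U.map (e.symm : E →ₗ[k] E) ∈ 𝔉)
    {X : Submodule k E} (hX : X ∈ argminMaxRelCodim 𝔉) :
    X.map (e : E →ₗ[k] E) ∈ argminMaxRelCodim 𝔉 :=
  ⟨map_mem_infClosure e he hX.1, fun Y hY =>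
    (maxRelCodim_map_le (relCodim_le_of_mem_infClosure hbound hX.1) e he').trans (hX.2 Y hY)⟩

theorem exists_le_sup_of_mem_argminMaxRelCodim {n : ℕ}
    (hbound : ∀ U ∈ 𝔉, ∀ W ∈ 𝔉, W.relCodim U ≤ n) {Z : Submodule k E}
    (hZ : Z ∈ argminMaxRelCodim 𝔉) :
    ∃ W ∈ 𝔉, ∀ X ∈ argminMaxRelCodim 𝔉, Z ≤ X → X ≤ Z ⊔ W := by
  obtain ⟨W, hW, hWZ⟩ := exists_toNat_relCodim_eq_maxRelCodim
    (relCodim_le_of_mem_infClosure hbound hZ.1)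
    ((exists_le_of_mem_infClosure hZ.1).imp fun _ h => h.1)
  refine ⟨W, hW, fun X hX hZX => le_sup_of_toNat_relCodim_le hZX
    ((relCodim_le_of_mem_infClosure hbound hX.1 W hW).trans_lt natCast_lt_aleph0) ?_⟩
  rw [hWZ]
  exact (toNat_relCodim_le_maxRelCodim (relCodim_le_of_mem_infClosure hbound hX.1) hW).trans
    (hX.2 Z hZ.1)

theorem relCodim_sSup_argminMaxRelCodim_le {n : ℕ}
    (hbound : ∀ U ∈ 𝔉, ∀ W ∈ 𝔉, W.relCodim U ≤ n) {M : Submodule k E}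
    (hM : M ∈ argminMaxRelCodim 𝔉) {C : ℕ} (hC : ∀ W ∈ 𝔉, M.relCodim W ≤ C) :
    M.relCodim (sSup (argminMaxRelCodim 𝔉)) ≤ C := by
  rw [relCodim_eq_rank_map_mkQ, sSup_eq_iSup', map_iSup]
  refine rank_iSup_le_of_forall_finset _ C fun t => ?_
  obtain ⟨Z, hZ, hZM, hZt⟩ :
      ∃ Z ∈ argminMaxRelCodim 𝔉, Z ≤ M ∧ ∀ X ∈ t, Z ≤ (X : Submodule k E) := by
    classical
    refine ⟨(insert M (t.image (↑))).inf' (Finset.insert_nonempty _ _) id,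
      (infClosed_argminMaxRelCodim hbound).finsetInf'_mem _ ?_,
      Finset.inf'_le _ (Finset.mem_insert_self _ _),
      fun X hX => Finset.inf'_le _ (Finset.mem_insert_of_mem (Finset.mem_image_of_mem _ hX))⟩
    simp only [Finset.mem_insert, Finset.mem_image]
    rintro _ (rfl | ⟨X, -, rfl⟩)
    exacts [hM, X.2]
  obtain ⟨W, hW, hsup⟩ := exists_le_sup_of_mem_argminMaxRelCodim hbound hZ
  refine ⟨W.map M.mkQ, fun X hX => ?_, (relCodim_eq_rank_map_mkQ W M).symm.trans_le (hC W hW)⟩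
  rw [map_le_iff_le_comap, comap_map_mkQ]
  exact (hsup X X.2 (hZt X hX)).trans (sup_le_sup_right hZM W)

end Submodule

open Submodule in
/-- Vector space version of Schlichting's Theorem. -/
theorem schlichting_vector_space {k V : Type*} [Field k] [AddCommGroup V] [Module k V]
    (Γ : Subgroup (V ≃ₗ[k] V)) (𝔉 : Set (Submodule k V)) (hne : 𝔉.Nonempty)
    (hinv : ∀ γ ∈ Γ, ∀ U ∈ 𝔉, U.map (γ : V →ₗ[k] V) ∈ 𝔉)
    (n : ℕ)
    (hbound : ∀ U ∈ 𝔉, ∀ W ∈ 𝔉,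
      Module.rank k (↥U ⧸ Submodule.comap U.subtype W) ≤ n) :
    ∃ N : Submodule k V, (∀ γ ∈ Γ, N.map (γ : V →ₗ[k] V) = N) ∧
      ∀ U ∈ 𝔉,
        Module.rank k (↥N ⧸ Submodule.comap N.subtype U) < ℵ₀ ∧
        Module.rank k (↥U ⧸ Submodule.comap U.subtype N) < ℵ₀ := by
  obtain ⟨M, hM⟩ := argminMaxRelCodim_nonempty hne
  obtain ⟨C, hC⟩ := exists_relCodim_le_of_mem_infClosure hbound hM.1
  have hMN : M ≤ sSup (argminMaxRelCodim 𝔉) := le_sSup hM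
  refine ⟨sSup (argminMaxRelCodim 𝔉), fun γ hγ => map_sSup_eq_of_forall_map_mem
    (fun γ hγ X => map_mem_argminMaxRelCodim hbound γ (hinv γ hγ) (hinv γ⁻¹ (inv_mem hγ))) hγ,
    fun U hU => ⟨?_, ?_⟩⟩
  · calc U.relCodim (sSup (argminMaxRelCodim 𝔉))
        ≤ M.relCodim (sSup (argminMaxRelCodim 𝔉)) + U.relCodim M := relCodim_triangle _ _ _
      _ ≤ C + n := add_le_add (relCodim_sSup_argminMaxRelCodim_le hbound hM hC)
          (relCodim_le_of_mem_infClosure hbound hM.1 U hU)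
      _ < ℵ₀ := add_lt_aleph0 natCast_lt_aleph0 natCast_lt_aleph0
  · exact ((relCodim_anti_left hMN U).trans (hC U hU)).trans_lt natCast_lt_aleph0
end

section
/- Let G be a group and S, F subgroups of G. Let S^F be the intersection over s ∈ S of the conjugates (SF)^s of the set SF. If S and F are commensurable subgroups, then S^F is a subgroup of G containing S, and the index [S^F : S] is finite. -/
open Pointwise

private lemma left_mul_mem_mulset {G : Type*} [Group G] {S F : Subgroup G} {t y : G}
    (ht : t ∈ S) (hy : y ∈ (S : Set G) * (F : Set G)) :
    t * y ∈ (S : Set G) * (F : Set G) := by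
  obtain ⟨s, hs, f, hf, rfl⟩ := hy
  exact ⟨t * s, mul_mem ht hs, f, hf, mul_assoc t s f⟩

private lemma mulset_mul_F {G : Type*} [Group G] {S F : Subgroup G} {y f : G}
    (hy : y ∈ (S : Set G) * (F : Set G)) (hf : f ∈ F) :
    y * f ∈ (S : Set G) * (F : Set G) := by
  obtain ⟨s, hs, g, hg, rfl⟩ := hy
  exact ⟨s, hs, g * f, mul_mem hg hf, (mul_assoc s g f).symm⟩

private lemma cover_lemma {G : Type*} [Group G] (S F : Subgroup G) {x : G}
    (hx : x ∈ (S : Set G) * (F : Set G)) :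
    ∃ q : F ⧸ S.subgroupOf F, x * ((Quotient.out q : F) : G) ∈ S := by
  obtain ⟨s, hs, f, hf, rfl⟩ := hx
  refine ⟨QuotientGroup.mk (⟨f, hf⟩⁻¹ : F), ?_⟩
  set q : F ⧸ S.subgroupOf F := QuotientGroup.mk (⟨f, hf⟩⁻¹ : F) with hq
  have h1 : (QuotientGroup.mk (Quotient.out q) : F ⧸ S.subgroupOf F) = q :=
    Quotient.out_eq q
  rw [hq, QuotientGroup.eq] at h1
  -- h1 : (Quotient.out q)⁻¹ * ⟨f, hf⟩⁻¹ ∈ S.subgroupOf F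
  have h2 : (((Quotient.out q : F) : G))⁻¹ * f⁻¹ ∈ S := by
    have := (Subgroup.mem_subgroupOf).mp h1
    simpa using this
  have h3 : f * ((Quotient.out q : F) : G) ∈ S := by
    have := inv_mem h2
    simpa using this
  have := mul_mem hs h3
  simpa [mul_assoc] using this

private lemma Ssub_lemma {G : Type*} [Group G] (S F : Subgroup G) :
    ∀ t ∈ S, ∀ s ∈ S, t * s ∈ (S : Set G) * (F : Set G) := by
  intro t ht s hs
  exact ⟨t * s, mul_mem ht hs, 1, one_mem F, mul_one _⟩

private lemma mul_closure_lemma {G : Type*} [Group G] (S F : Subgroup G) :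
    ∀ x y : G, (∀ s ∈ S, x * s ∈ (S : Set G) * (F : Set G)) →
      (∀ s ∈ S, y * s ∈ (S : Set G) * (F : Set G)) →
      ∀ s ∈ S, x * y * s ∈ (S : Set G) * (F : Set G) := by
  intro x y hx hy s hs
  obtain ⟨t, ht, f, hf, hpf⟩ := hy s hs
  have hxt := hx t ht
  have heq : x * y * s = (x * t) * f := by
    rw [mul_assoc x y s, ← hpf, ← mul_assoc]
  rw [heq]
  exact mulset_mul_F hxt hf

private lemma pow_closure_lemma {G : Type*} [Group G] (S F : Subgroup G) :
    ∀ x : G, (∀ s ∈ S, x * s ∈ (S : Set G) * (F : Set G)) →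
      ∀ n : ℕ, ∀ s ∈ S, x ^ n * s ∈ (S : Set G) * (F : Set G) := by
  intro x hx n
  induction n with
  | zero => intro s hs; simpa using Ssub_lemma S F 1 (one_mem S) s hs
  | succ n ih =>
      intro s hs
      rw [pow_succ']
      exact mul_closure_lemma S F x (x ^ n) hx ih s hs

private lemma inv_closure_lemma {G : Type*} [Group G] (S F : Subgroup G)
    (hrel : S.relIndex F ≠ 0) :
    ∀ x : G, (∀ s ∈ S, x * s ∈ (S : Set G) * (F : Set G)) →
      ∀ s ∈ S, x⁻¹ * s ∈ (S : Set G) * (F : Set G) := by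
  classical
  have hQfin : Finite (F ⧸ S.subgroupOf F) := by
    rw [Subgroup.relIndex, Subgroup.index] at hrel
    exact Nat.finite_of_card_ne_zero hrel
  intro x hx
  have hxnA : ∀ n : ℕ, x ^ n ∈ (S : Set G) * (F : Set G) := by
    intro n
    simpa using pow_closure_lemma S F x hx n 1 (one_mem S)
  have hc : ∀ n : ℕ, ∃ q : F ⧸ S.subgroupOf F,
      x ^ (n + 1) * ((Quotient.out q : F) : G) ∈ S := fun n =>
    cover_lemma S F (hxnA (n + 1))
  choose c hcS using hc
  obtain ⟨a, b, hab, hcab⟩ := Finite.exists_ne_map_eq_of_infinite c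
  wlog hlt : a < b generalizing a b
  · exact this b a hab.symm hcab.symm (by omega)
  obtain ⟨d, hd⟩ : ∃ d, b = a + 1 + d := ⟨b - a - 1, by omega⟩
  set t : G := ((Quotient.out (c a) : F) : G) with hts
  have h1 : x ^ (a + 1) * t ∈ S := hcS a
  have h2 : x ^ (b + 1) * t ∈ S := by
    have := hcS b; rwa [← hcab] at this
  have hxd : x ^ (d + 1) ∈ S := by
    have hsplit : x ^ (b + 1) = x ^ (d + 1) * x ^ (a + 1) := by
      rw [← pow_add]; congr 1; omega
    have hm := mul_mem h2 (inv_mem h1)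
    have heq : x ^ (b + 1) * t * (x ^ (a + 1) * t)⁻¹ = x ^ (d + 1) := by
      rw [hsplit]; group
    rwa [heq] at hm
  intro s hs
  have hs' : (x ^ (d + 1))⁻¹ * s ∈ S := mul_mem (inv_mem hxd) hs
  have hmem := pow_closure_lemma S F x hx d ((x ^ (d + 1))⁻¹ * s) hs'
  have heq : x ^ d * ((x ^ (d + 1))⁻¹ * s) = x⁻¹ * s := by
    rw [pow_succ']; group
  rwa [heq] at hmem

private def incrementSubgroup {G : Type*} [Group G] (S F : Subgroup G)
    (hrel : S.relIndex F ≠ 0) : Subgroup G where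
  carrier := {x : G | ∀ s ∈ S, x * s ∈ (S : Set G) * (F : Set G)}
  one_mem' := by
    intro s hs
    simpa using Ssub_lemma S F 1 (one_mem S) s hs
  mul_mem' := fun {x y} hx hy => mul_closure_lemma S F x y hx hy
  inv_mem' := fun {x} hx => inv_closure_lemma S F hrel x hx

/-- For commensurable subgroups `S, F` of `G`, the intersection
`S^F = ⋂_{s ∈ S} s⁻¹(SF)s` is a subgroup containing `S` of finite index over `S`. -/
theorem increment_subgroup {G : Type*} [Group G] (S F : Subgroup G)
    (h : Subgroup.Commensurable S F) :
    ∃ N : Subgroup G,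
      (N : Set G) = ⋂ s ∈ (S : Set G), (fun x => s⁻¹ * x * s) '' ((S : Set G) * (F : Set G)) ∧
      S ≤ N ∧ S.relIndex N ≠ 0 := by
  classical
  have hrel : S.relIndex F ≠ 0 := h.1
  set N : Subgroup G := incrementSubgroup S F hrel with hNdef
  have hmemN : ∀ x : G, x ∈ N ↔ ∀ s ∈ S, x * s ∈ (S : Set G) * (F : Set G) := fun x => Iff.rfl
  refine ⟨N, ?_, ?_, ?_⟩
  · ext x
    simp only [SetLike.mem_coe, hmemN, Set.mem_iInter, Set.mem_image, SetLike.mem_coe]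
    constructor
    · intro hx s hs
      refine ⟨s * x * s⁻¹, ?_, by group⟩
      have := left_mul_mem_mulset hs (hx s⁻¹ (inv_mem hs))
      simpa [mul_assoc] using this
    · intro hx s hs
      obtain ⟨a, ha, hax⟩ := hx s⁻¹ (inv_mem hs)
      have heq : x * s = s * a := by rw [← hax]; group
      rw [heq]
      exact left_mul_mem_mulset hs ha
  · intro t ht
    rw [hmemN]
    exact Ssub_lemma S F t ht
  · have hQfin : Finite (F ⧸ S.subgroupOf F) := by
      have hrel' := hrel
      rw [Subgroup.relIndex, Subgroup.index] at hrel'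
      exact Nat.finite_of_card_ne_zero hrel'
    have hcov : ∀ n : N, ∃ q : F ⧸ S.subgroupOf F,
        ((n : G))⁻¹ * ((Quotient.out q : F) : G) ∈ S := by
      intro n
      have hn : (n : G)⁻¹ ∈ N := inv_mem n.2
      have hnA : (n : G)⁻¹ ∈ (S : Set G) * (F : Set G) := by
        have := (hmemN _).mp hn 1 (one_mem S)
        simpa using this
      exact cover_lemma S F hnA
    choose cf hcf using hcov
    have hfin : Finite (N ⧸ S.subgroupOf N) := by
      have hinj : Function.Injective
          (fun cq : N ⧸ S.subgroupOf N => cf (Quotient.out cq)) := by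
        intro c1 c2 hcc
        have h1 := hcf (Quotient.out c1)
        have h2 := hcf (Quotient.out c2)
        simp only at hcc
        rw [hcc] at h1
        have hmemS : ((Quotient.out c1 : N) : G)⁻¹ * ((Quotient.out c2 : N) : G) ∈ S := by
          have hm := mul_mem h1 (inv_mem h2)
          have heq : ((Quotient.out c1 : N) : G)⁻¹ *
              ((Quotient.out (cf (Quotient.out c2)) : F) : G) *
              (((Quotient.out c2 : N) : G)⁻¹ *
                ((Quotient.out (cf (Quotient.out c2)) : F) : G))⁻¹
              = ((Quotient.out c1 : N) : G)⁻¹ * ((Quotient.out c2 : N) : G) := by group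
          rwa [heq] at hm
        have hrelmem : (Quotient.out c1 : N)⁻¹ * (Quotient.out c2 : N) ∈ S.subgroupOf N := by
          rw [Subgroup.mem_subgroupOf]
          simpa using hmemS
        calc c1 = QuotientGroup.mk (Quotient.out c1) := (Quotient.out_eq c1).symm
          _ = QuotientGroup.mk (Quotient.out c2) := QuotientGroup.eq.mpr hrelmem
          _ = c2 := Quotient.out_eq c2
      exact Finite.of_injective _ hinj
    rw [Subgroup.relIndex, Subgroup.index]
    exact Nat.card_ne_zero.mpr ⟨inferInstance, hfin⟩
end

section
/- Let G be a group, S ≤ T subgroups, and F a subgroup commensurable with both. If T ⊆ SF (so SF = TF as sets), then ⋂_{s ∈ S} s⁻¹(SF)s = ⋂_{t ∈ T} t⁻¹(TF)t. -/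
open Pointwise

/-!
Put `X = SF`; the hypotheses give `X = TF`, a set that is invariant under left multiplication
by `T` and right multiplication by `F`. Hence for `t ∈ T` the conjugate `t⁻¹ X t` is just `X t`,
and writing `t⁻¹ = s f` with `s ∈ S`, `f ∈ F` shows that `x s ∈ X` for all `s ∈ S` already
forces `x t⁻¹ = x s f ∈ X`.
-/

namespace Subgroup

variable {G : Type*} [Group G] (H K : Subgroup G)

theorem smul_coe_mul_coe {h : G} (hh : h ∈ H) : h • ((H : Set G) * K) = H * K := by
  rw [← smul_mul_assoc, smul_coe_set hh]

theorem op_smul_coe_mul_coe {k : G} (hk : k ∈ K) :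
    MulOpposite.op k • ((H : Set G) * K) = H * K := by
  rw [← mul_smul_comm, op_smul_coe_set hk]

variable {H K}

theorem mul_mem_coe_mul_coe_iff_left {h y : G} (hh : h ∈ H) :
    h * y ∈ (H : Set G) * K ↔ y ∈ (H : Set G) * K := by
  calc h * y ∈ (H : Set G) * K ↔ y ∈ h⁻¹ • ((H : Set G) * K) := by
        rw [Set.mem_smul_set_iff_inv_smul_mem, inv_inv, smul_eq_mul]
    _ ↔ y ∈ (H : Set G) * K := by rw [smul_coe_mul_coe H K (inv_mem hh)]

theorem mul_mem_coe_mul_coe_iff_right {k y : G} (hk : k ∈ K) :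
    y * k ∈ (H : Set G) * K ↔ y ∈ (H : Set G) * K := by
  calc y * k ∈ (H : Set G) * K ↔ y ∈ MulOpposite.op k⁻¹ • ((H : Set G) * K) := by
        rw [Set.mem_smul_set_iff_inv_smul_mem, ← MulOpposite.op_inv, inv_inv, op_smul_eq_mul]
    _ ↔ y ∈ (H : Set G) * K := by rw [op_smul_coe_mul_coe H K (inv_mem hk)]

theorem mem_conj_image_coe_mul_coe_iff {g x : G} (hg : g ∈ H) :
    x ∈ (fun y => g⁻¹ * y * g) '' ((H : Set G) * K) ↔ x * g⁻¹ ∈ (H : Set G) * K := by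
  constructor
  · rintro ⟨y, hy, rfl⟩
    rwa [mul_inv_cancel_right, mul_mem_coe_mul_coe_iff_left (inv_mem hg)]
  · intro hx
    exact ⟨g * (x * g⁻¹), (mul_mem_coe_mul_coe_iff_left hg).2 hx, by group⟩

theorem coe_mul_coe_eq_of_le_of_subset {S T F : Subgroup G} (hST : S ≤ T)
    (hsub : (T : Set G) ⊆ (S : Set G) * (F : Set G)) :
    (S : Set G) * F = (T : Set G) * F := by
  refine (Set.mul_subset_mul_right hST).antisymm ?_
  calc (T : Set G) * F ⊆ (S : Set G) * F * F := Set.mul_subset_mul_right hsub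
    _ = (S : Set G) * F := by rw [mul_assoc, coe_mul_coe]

end Subgroup

open Subgroup in
theorem increment_eq_of_sub_general {G : Type*} [Group G] (S T F : Subgroup G)
    (hST : S ≤ T)
    (hsub : (T : Set G) ⊆ (S : Set G) * (F : Set G)) :
    ⋂ s ∈ (S : Set G), (fun x => s⁻¹ * x * s) '' ((S : Set G) * (F : Set G)) =
    ⋂ t ∈ (T : Set G), (fun x => t⁻¹ * x * t) '' ((T : Set G) * (F : Set G)) := by
  rw [coe_mul_coe_eq_of_le_of_subset hST hsub]
  ext x
  simp only [Set.mem_iInter₂, SetLike.mem_coe]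
  constructor
  · intro hS t ht
    rw [mem_conj_image_coe_mul_coe_iff ht]
    obtain ⟨s, hs, f, hf, hsf⟩ := hsub (inv_mem ht)
    have hxs : x * s ∈ (T : Set G) * F := by
      simpa using (mem_conj_image_coe_mul_coe_iff (hST (inv_mem hs))).1 (hS s⁻¹ (inv_mem hs))
    rw [← hsf, ← mul_assoc]
    exact (mul_mem_coe_mul_coe_iff_right hf).2 hxs
  · exact fun hT s hs => hT s (hST hs)

/-- If `S ≤ T` are subgroups commensurable with `F` and `T ⊆ SF`, then
`⋂_{s ∈ S} s⁻¹(SF)s = ⋂_{t ∈ T} t⁻¹(TF)t`. -/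
theorem increment_eq_of_sub {G : Type*} [Group G] (S T F : Subgroup G)
    (hST : S ≤ T) (hSF : Subgroup.Commensurable S F) (hTF : Subgroup.Commensurable T F)
    (hsub : (T : Set G) ⊆ (S : Set G) * (F : Set G)) :
    ⋂ s ∈ (S : Set G), (fun x => s⁻¹ * x * s) '' ((S : Set G) * (F : Set G)) =
    ⋂ t ∈ (T : Set G), (fun x => t⁻¹ * x * t) '' ((T : Set G) * (F : Set G)) :=
  increment_eq_of_sub_general S T F hST hsub
end

section
/- Let L/F be a Galois extension and F' an intermediate field of L/F with [L : F'] possibly infinite. If H = Gal(L/F') and H' ≤ Gal(L/F) is a closed subgroup commensurable with H (both indices [H : H ∩ H'] and [H' : H ∩ H'] finite), then the fixed field Fix_L(H') is commensurable with F' in the sense that [F'·Fix_L(H') : F'] and [F'·Fix_L(H') : Fix_L(H')] are finite. -/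
/-!
Put `N = Gal(L/F') ⊓ H'`; the compositum `F' ⊔ Fix(H')` is fixed by `N`. For any subgroup `G`
of `Gal(L/F)`, an element fixed by `N` has a `G`-orbit of size at most `[G : G ⊓ N]`, and the
product of `X - y` over that orbit has coefficients in `Fix(G)`, so the element has degree at
most `[G : G ⊓ N]` over `Fix(G)`. By the primitive element theorem, a separable extension of
bounded degree is finite. Take `G = Gal(L/F')`, whose fixed field is `F'`, and `G = H'`.
-/

open IntermediateField Polynomial Module MulAction

section BoundedDegree

variable {F E : Type*} [Field F] [Field E] [Algebra F E] [Algebra.IsSeparable F E]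

theorem exists_adjoin_simple_eq_sup (x y : E) : ∃ z : E, F⟮z⟯ = F⟮x⟯ ⊔ F⟮y⟯ := by
  have := adjoin.finiteDimensional (Algebra.IsSeparable.isIntegral F x)
  have := adjoin.finiteDimensional (Algebra.IsSeparable.isIntegral F y)
  have : Algebra.IsSeparable F ↥(F⟮x⟯ ⊔ F⟮y⟯) :=
    Algebra.isSeparable_tower_bot_of_isSeparable F _ E
  obtain ⟨z, hz⟩ := Field.exists_primitive_element F ↥(F⟮x⟯ ⊔ F⟮y⟯)
  exact ⟨z, by simpa only [lift_adjoin_simple, lift_top] using congr_arg lift hz⟩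

theorem FiniteDimensional.of_forall_natDegree_minpoly_le (n : ℕ)
    (h : ∀ x : E, (minpoly F x).natDegree ≤ n) : FiniteDimensional F E := by
  have hbdd : BddAbove (Set.range fun x : E ↦ finrank F F⟮x⟯) := ⟨n, by
    rintro - ⟨x, rfl⟩
    exact (adjoin.finrank (Algebra.IsSeparable.isIntegral F x)).trans_le (h x)⟩
  obtain ⟨x, hx⟩ := Nat.sSup_mem (Set.range_nonempty _) hbdd
  have hmax (z : E) : finrank F F⟮z⟯ ≤ finrank F F⟮x⟯ :=
    (le_csSup hbdd ⟨z, rfl⟩).trans hx.ge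
  refine Field.FiniteDimensional.of_exists_primitive_element F E
    ⟨x, top_le_iff.mp fun y _ ↦ ?_⟩
  obtain ⟨z, hz⟩ := exists_adjoin_simple_eq_sup (F := F) x y
  have := adjoin.finiteDimensional (Algebra.IsSeparable.isIntegral F z)
  have hxz : F⟮x⟯ = F⟮z⟯ := eq_of_le_of_finrank_le (hz ▸ le_sup_left) (hmax z)
  exact hxz ▸ hz ▸ (le_sup_right : F⟮y⟯ ≤ _) (mem_adjoin_simple_self F y)

end BoundedDegree

section OrbitPolynomial

variable {F L : Type*} [Field F] [Field L] [Algebra F L]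

theorem natDegree_minpoly_fixedField_le_card_orbit (G : Subgroup (L ≃ₐ[F] L)) (x : L)
    [Finite (orbit G x)] : (minpoly (fixedField G) x).natDegree ≤ Nat.card (orbit G x) := by
  have := Fintype.ofFinite (orbit G x)
  set P : L[X] := ∏ y : orbit G x, (X - C (y : L)) with hP
  have hP_smul (g : G) : g • P = P :=
    Finset.smul_prod'.trans <| Fintype.prod_bijective _ (MulAction.bijective g) _ _ fun y ↦ by
      rw [smul_sub, smul_X, smul_C, orbit.coe_smul]
  have hP_lifts : P ∈ lifts (algebraMap (fixedField G) L) :=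
    (lifts_iff_coeff_lifts P).2 fun n ↦
      ⟨⟨P.coeff n, fun g ↦ by rw [← coeff_smul, hP_smul]⟩, rfl⟩
  have hP_monic : P.Monic := monic_prod_of_monic _ _ fun y _ ↦ monic_X_sub_C (y : L)
  obtain ⟨Q, hQP, hQdeg, hQmonic⟩ := lifts_and_natDegree_eq_and_monic hP_lifts hP_monic
  have hQx : aeval x Q = 0 := by
    rw [aeval_def, ← eval_map, hQP, hP, eval_prod]
    exact Finset.prod_eq_zero (Finset.mem_univ ⟨x, mem_orbit_self x⟩) (by simp)
  calc (minpoly (fixedField G) x).natDegree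
      ≤ Q.natDegree := natDegree_le_of_dvd (minpoly.dvd _ _ hQx) hQmonic.ne_zero
    _ = Nat.card (orbit G x) := by
      rw [hQdeg, hP, natDegree_finsetProd_X_sub_C_eq_card, Finset.card_univ,
        Nat.card_eq_fintype_card]

theorem natDegree_minpoly_fixedField_le_relIndex {G N : Subgroup (L ≃ₐ[F] L)}
    (hN : N.relIndex G ≠ 0) {x : L} (hx : x ∈ fixedField N) :
    (minpoly (fixedField G) x).natDegree ≤ N.relIndex G := by
  have : (N.subgroupOf G).FiniteIndex := ⟨hN⟩
  have hstab : N.subgroupOf G ≤ stabilizer G x := fun σ hσ ↦ hx ⟨σ, hσ⟩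
  have := Subgroup.finiteIndex_of_le hstab
  have : Finite (orbit G x) := Finite.of_equiv _ (orbitEquivQuotientStabilizer G x).symm
  calc (minpoly (fixedField G) x).natDegree ≤ Nat.card (orbit G x) :=
        natDegree_minpoly_fixedField_le_card_orbit G x
    _ = (stabilizer G x).index := by rw [index_stabilizer, Nat.card_coe_set_eq]
    _ ≤ N.relIndex G := Subgroup.index_antitone hstab

end OrbitPolynomial

theorem finiteDimensional_extendScalars_of_le_fixedField {F L : Type*} [Field F] [Field L]
    [Algebra F L] [Algebra.IsSeparable F L] {G N : Subgroup (L ≃ₐ[F] L)}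
    (hN : N.relIndex G ≠ 0)
    {E K : IntermediateField F L} (hE : fixedField G = E) (hEK : E ≤ K)
    (hKN : K ≤ fixedField N) : FiniteDimensional E (extendScalars hEK) := by
  subst hE
  have : Algebra.IsSeparable (fixedField G) L :=
    Algebra.isSeparable_tower_top_of_isSeparable F (fixedField G) L
  have : Algebra.IsSeparable (fixedField G) (extendScalars hEK) :=
    Algebra.isSeparable_tower_bot_of_isSeparable (fixedField G) _ L
  refine FiniteDimensional.of_forall_natDegree_minpoly_le (N.relIndex G) fun x ↦ ?_
  rw [← minpoly.algebraMap_eq (algebraMap (extendScalars hEK) L).injective x]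
  exact natDegree_minpoly_fixedField_le_relIndex hN (hKN x.2)

theorem fixedField_commensurable_general {F L : Type*} [Field F] [Field L] [Algebra F L]
    [IsGalois F L] (F' : IntermediateField F L) (H' : Subgroup (L ≃ₐ[F] L))
    (hcomm : Subgroup.Commensurable F'.fixingSubgroup H') :
    FiniteDimensional ↥F'
      ↥(IntermediateField.extendScalars
        (le_sup_left : F' ≤ F' ⊔ IntermediateField.fixedField H')) ∧
    FiniteDimensional ↥(IntermediateField.fixedField H')
      ↥(IntermediateField.extendScalars
        (le_sup_right : IntermediateField.fixedField H' ≤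
          F' ⊔ IntermediateField.fixedField H')) := by
  let N := F'.fixingSubgroup ⊓ H'
  have hKN : F' ⊔ fixedField H' ≤ fixedField N :=
    sup_le ((le_iff_le N F').mpr inf_le_left) (fixedField_antitone inf_le_right)
  constructor
  · exact finiteDimensional_extendScalars_of_le_fixedField
      ((Subgroup.inf_relIndex_left _ _).trans_ne hcomm.2)
      (InfiniteGalois.fixedField_fixingSubgroup F') _ hKN
  · exact finiteDimensional_extendScalars_of_le_fixedField
      ((Subgroup.inf_relIndex_right _ _).trans_ne hcomm.1) rfl _ hKN

/-- If `L/F` is Galois, `F'` an intermediate field with Galois group `H = Gal(L/F')`,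
and `H'` is a closed subgroup of `Gal(L/F)` commensurable with `H`, then the fixed
field of `H'` is commensurable with `F'`. -/
theorem fixedField_commensurable {F L : Type*} [Field F] [Field L] [Algebra F L]
    [IsGalois F L] (F' : IntermediateField F L) (H' : Subgroup (L ≃ₐ[F] L))
    (hclosed : IsClosed (H' : Set (L ≃ₐ[F] L)))
    (hcomm : Subgroup.Commensurable F'.fixingSubgroup H') :
    FiniteDimensional ↥F'
      ↥(IntermediateField.extendScalars
        (le_sup_left : F' ≤ F' ⊔ IntermediateField.fixedField H')) ∧
    FiniteDimensional ↥(IntermediateField.fixedField H')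
      ↥(IntermediateField.extendScalars
        (le_sup_right : IntermediateField.fixedField H' ≤
          F' ⊔ IntermediateField.fixedField H')) :=
  fixedField_commensurable_general F' H' hcomm
end
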